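/- arXiv:1806.06438 — 3 statements merged into one kernel-verified Lean document; each statement's English description precedes it below -/
import Mathlib

section
/- Let f : ℝ^p → ℝ^n be differentiable with Jacobian mapping J(θ) ∈ ℝ^{n×p} (the matrix of the Fréchet derivative of f at θ), let y ∈ ℝ^n, and let θ₀ ∈ ℝ^p. Let ‖·‖_* be a norm on ℝ^p dominated by the Euclidean norm (‖θ‖_* ≤ ‖θ‖₂ for all θ). Suppose there exist α, β > 0 with: (1) σ_min(J(θ₀)) ≥ 2α; (2) for all θ with ‖θ − θ₀‖_* ≤ R := 5‖y − f(θ₀)‖₂/α, the spectral norm bound ‖J(θ) − J(θ₀)‖ ≤ α/3 holds; (3) ‖J(θ)‖ ≤ β for all θ ∈ ℝ^p. Then for any constant step size 0 < η ≤ 1/β², the gradient iterations θ_{τ+1} = θ_τ − η·J(θ_τ)ᵀ(f(θ_τ) − y) satisfy, for every τ ≥ 0: ‖y − f(θ_τ)‖₂ ≤ (1 − ηα²/4)^τ ‖y − f(θ₀)‖₂ and (α/5)‖θ_τ − θ₀‖_* + ‖y − f(θ_τ)‖₂ ≤ ‖y − f(θ₀)‖₂. -/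
/-!
Write `e = f θ - y` for the residual and `J = fderiv ℝ f θ`. A gradient step moves `θ` by
`-η Jᵀ e` and, to first order, replaces `e` by `(1 - η J Jᵀ) e`. While `θ` stays in the ball of
radius `5 ‖y - f θ₀‖ / α` around `θ₀`, `J` is within `α / 3` of `J θ₀`, so `Jᵀ` is bounded below
by `5α/3`; the linearized residual then contracts by `1 - 25ηα²/9` and its square drops by
`η ‖Jᵀ e‖²`, while the mean value inequality bounds the nonlinear remainder by `(2α/3) η ‖Jᵀ e‖`.
Together these give `‖e'‖ + (α/5) ‖θ' - θ‖ ≤ ‖e‖`: the decrease of the residual pays for the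
distance travelled, so by induction the iterates never leave the ball.
-/

open ContinuousLinearMap
open scoped RealInnerProductSpace

theorem ContinuousLinearMap.opNorm_le_of_abs_inner_le {E : Type*} [NormedAddCommGroup E]
    [InnerProductSpace ℝ E] {T : E →L[ℝ] E} (hT : (T : E →ₗ[ℝ] E).IsSymmetric) {c : ℝ}
    (hc : 0 ≤ c) (h : ∀ x, |⟪T x, x⟫| ≤ c * ‖x‖ ^ 2) : ‖T‖ ≤ c := by
  rw [T.norm_eq_iSup_rayleighQuotient hT]
  refine ciSup_le fun x => ?_
  rcases eq_or_ne x 0 with rfl | hx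
  · simpa using hc
  rw [rayleighQuotient, reApplyInnerSelf_apply, RCLike.re_to_real, abs_div, abs_sq,
    div_le_iff₀ (by positivity)]
  exact h x

theorem ContinuousLinearMap.norm_adjoint_apply_le {E F : Type*} [NormedAddCommGroup E]
    [InnerProductSpace ℝ E] [CompleteSpace E] [NormedAddCommGroup F] [InnerProductSpace ℝ F]
    [CompleteSpace F] (A : E →L[ℝ] F) (v : F) : ‖adjoint A v‖ ≤ ‖A‖ * ‖v‖ := by
  simpa using (adjoint A).le_opNorm v

section LowerBound

variable {E F : Type*} [NormedAddCommGroup E] [NormedSpace ℝ E] [NormedAddCommGroup F]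
  [NormedSpace ℝ F]

theorem mul_norm_le_norm_apply_of_le_iInf_sphere (A : F →L[ℝ] E) {c : ℝ}
    (h : c ≤ ⨅ u : {u : F // ‖u‖ = 1}, ‖A u‖) (v : F) : c * ‖v‖ ≤ ‖A v‖ := by
  rcases eq_or_ne v 0 with rfl | hv
  · simp
  have hv' : 0 < ‖v‖ := norm_pos_iff.mpr hv
  have hu : ‖‖v‖⁻¹ • v‖ = 1 := by rw [norm_smul, norm_inv, norm_norm, inv_mul_cancel₀ hv'.ne']
  have hbdd : BddBelow (Set.range fun u : {u : F // ‖u‖ = 1} => ‖A u‖) :=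
    ⟨0, by rintro _ ⟨u, rfl⟩; positivity⟩
  have hcu : c ≤ ‖v‖⁻¹ * ‖A v‖ := by
    simpa [norm_smul] using h.trans (ciInf_le hbdd ⟨_, hu⟩)
  rwa [le_inv_mul_iff₀ hv', mul_comm] at hcu

theorem le_opNorm_of_le_iInf_sphere (A : F →L[ℝ] E) {c : ℝ} (hc : 0 < c)
    (h : c ≤ ⨅ u : {u : F // ‖u‖ = 1}, ‖A u‖) : c ≤ ‖A‖ := by
  obtain ⟨u⟩ : Nonempty {u : F // ‖u‖ = 1} := by
    -- the infimum over the empty unit sphere of a trivial `F` is the junk value `0`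
    by_contra hempty
    rw [not_nonempty_iff] at hempty
    rw [Real.iInf_of_isEmpty] at h
    linarith
  simpa [u.2] using (mul_norm_le_norm_apply_of_le_iInf_sphere A h u).trans (A.le_opNorm u)

theorem mul_norm_le_norm_apply_of_norm_sub_le {A B : F →L[ℝ] E} {c d : ℝ}
    (hA : ∀ v, c * ‖v‖ ≤ ‖A v‖) (hAB : ‖B - A‖ ≤ d) (v : F) : (c - d) * ‖v‖ ≤ ‖B v‖ := by
  have hdiff : ‖A v - B v‖ ≤ d * ‖v‖ :=
    calc ‖A v - B v‖ = ‖(B - A) v‖ := by rw [sub_apply, norm_sub_rev]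
      _ ≤ ‖B - A‖ * ‖v‖ := le_opNorm _ _
      _ ≤ d * ‖v‖ := by gcongr
  linarith [hA v, norm_sub_norm_le (A v) (B v)]

end LowerBound

theorem Seminorm.map_sub_le_of_mem_segment {V : Type*} [AddCommGroup V] [Module ℝ V]
    (N : Seminorm ℝ V) {a b ξ : V} (c : V) (hξ : ξ ∈ segment ℝ a b) :
    N (ξ - c) ≤ N (a - c) + N (b - a) := by
  rw [segment_eq_image'] at hξ
  obtain ⟨t, ⟨ht0, ht1⟩, rfl⟩ := hξ
  calc N (a + t • (b - a) - c) = N ((a - c) + t • (b - a)) := by rw [add_sub_right_comm]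
    _ ≤ N (a - c) + ‖t‖ * N (b - a) := by rw [← map_smul_eq_mul]; exact map_add_le_add _ _ _
    _ ≤ N (a - c) + N (b - a) := by
      rw [Real.norm_of_nonneg ht0]
      nlinarith [apply_nonneg N (b - a)]

section LinearStep

variable {E F : Type*} [NormedAddCommGroup E] [InnerProductSpace ℝ E] [CompleteSpace E]
  [NormedAddCommGroup F] [InnerProductSpace ℝ F] [CompleteSpace F]

/-- The residual `J θ - y` after one gradient step of size `η` on the linear least-squares
objective `‖J θ - y‖² / 2`, as a function of the residual `e = J θ - y` before it. -/
noncomputable def linearResidualStep (J : E →L[ℝ] F) (η : ℝ) (e : F) : F :=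
  e - η • J (adjoint J e)

theorem norm_linearResidualStep_le {J : E →L[ℝ] F} {σ β η : ℝ} (hσ : 0 ≤ σ) (hσβ : σ ≤ β)
    (hη : 0 ≤ η) (hηβ : η * β ^ 2 ≤ 1) (hJ : ‖J‖ ≤ β)
    (hlow : ∀ v, σ * ‖v‖ ≤ ‖adjoint J v‖) (e : F) :
    ‖linearResidualStep J η e‖ ≤ (1 - η * σ ^ 2) * ‖e‖ := by
  set T : F →L[ℝ] F := 1 - η • (J ∘L adjoint J)
  have hT : ∀ v, T v = linearResidualStep J η v := fun v => by simp [T, linearResidualStep]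
  have hinner : ∀ u v, ⟪T u, v⟫ = ⟪u, v⟫ - η * ⟪adjoint J u, adjoint J v⟫ := fun u v => by
    rw [hT, linearResidualStep, inner_sub_left, real_inner_smul_left, ← adjoint_inner_right]
  have hsymm : (T : F →ₗ[ℝ] F).IsSymmetric := fun u v => by
    rw [coe_coe, hinner, real_inner_comm (T v) u, hinner, real_inner_comm u v,
      real_inner_comm (adjoint J u)]
  have hquad : ∀ v, |⟪T v, v⟫| ≤ (1 - η * σ ^ 2) * ‖v‖ ^ 2 := fun v => by
    have hup : σ ^ 2 * ‖v‖ ^ 2 ≤ ‖adjoint J v‖ ^ 2 := by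
      rw [← mul_pow]; exact pow_le_pow_left₀ (by positivity) (hlow v) 2
    have hdown : ‖adjoint J v‖ ^ 2 ≤ β ^ 2 * ‖v‖ ^ 2 := by
      rw [← mul_pow]
      exact pow_le_pow_left₀ (norm_nonneg _) ((J.norm_adjoint_apply_le v).trans (by gcongr)) 2
    rw [hinner, real_inner_self_eq_norm_sq, real_inner_self_eq_norm_sq, abs_le]
    constructor <;> nlinarith [mul_le_mul_of_nonneg_left hup hη,
      mul_le_mul_of_nonneg_left hdown hη, pow_le_pow_left₀ hσ hσβ 2, sq_nonneg ‖v‖]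
  have hc : 0 ≤ 1 - η * σ ^ 2 := by nlinarith [pow_le_pow_left₀ hσ hσβ 2]
  rw [← hT]
  exact (T.le_opNorm e).trans (by gcongr; exact opNorm_le_of_abs_inner_le hsymm hc hquad)

theorem norm_linearResidualStep_sq_le {J : E →L[ℝ] F} {β η : ℝ} (hη : 0 ≤ η)
    (hηβ : η * β ^ 2 ≤ 1) (hJ : ‖J‖ ≤ β) (e : F) :
    ‖linearResidualStep J η e‖ ^ 2 ≤ ‖e‖ ^ 2 - η * ‖adjoint J e‖ ^ 2 := by
  have hJg : ‖J (adjoint J e)‖ ^ 2 ≤ β ^ 2 * ‖adjoint J e‖ ^ 2 := by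
    rw [← mul_pow]
    exact pow_le_pow_left₀ (norm_nonneg _) ((J.le_opNorm _).trans (by gcongr)) 2
  rw [linearResidualStep, norm_sub_sq_real, real_inner_smul_right, ← adjoint_inner_left,
    real_inner_self_eq_norm_sq, norm_smul, mul_pow, Real.norm_of_nonneg hη]
  nlinarith [mul_le_mul_of_nonneg_left hJg (sq_nonneg η), mul_le_mul_of_nonneg_right hηβ
    (mul_nonneg hη (sq_nonneg ‖adjoint J e‖))]

theorem norm_add_le_of_norm_sub_linearResidualStep_le {J : E →L[ℝ] F} {α β η : ℝ}
    (hα : 0 < α) (hη : 0 < η) (hηβ : η * β ^ 2 ≤ 1) (hαβ : 5 * α / 3 ≤ β) (hJ : ‖J‖ ≤ β)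
    (hlow : ∀ v, 5 * α / 3 * ‖v‖ ≤ ‖adjoint J v‖) {e e' : F}
    (he' : ‖e' - linearResidualStep J η e‖ ≤ 2 * α / 3 * (η * ‖adjoint J e‖)) :
    ‖e'‖ + α / 5 * (η * ‖adjoint J e‖) ≤ ‖e‖ := by
  set w := ‖linearResidualStep J η e‖
  set r := ‖e‖
  set s := ‖adjoint J e‖
  have hlin : w ≤ (1 - 25 * η * α ^ 2 / 9) * r := by
    convert norm_linearResidualStep_le (by positivity) hαβ hη.le hηβ hJ hlow e using 2; ring
  have hquad : w ^ 2 ≤ r ^ 2 - η * s ^ 2 := norm_linearResidualStep_sq_le hη.le hηβ hJ e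
  have he'w : ‖e'‖ ≤ w + 2 * α / 3 * (η * s) := by
    linarith [norm_le_norm_add_norm_sub' e' (linearResidualStep J η e)]
  have hr : 0 ≤ r := norm_nonneg e
  have hw : 0 ≤ w := norm_nonneg _
  have hs : 0 ≤ s := norm_nonneg _
  -- For small gradients the contraction `hlin` suffices, for large ones the decrease `hquad`.
  rcases le_or_gt s (2 * α * r) with hsr | hsr
  · nlinarith [mul_le_mul_of_nonneg_left hsr (mul_nonneg hη.le hα.le),
      mul_nonneg (mul_nonneg hη.le hα.le) hs,
      mul_nonneg (mul_nonneg (mul_nonneg hη.le hα.le) hα.le) hr]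
  · have hrw : 2 * r * w ≤ 2 * r ^ 2 - η * s ^ 2 := by nlinarith [sq_nonneg (r - w)]
    have hr0 : 0 < r := by
      by_contra! h
      nlinarith [mul_pos hη (mul_pos (lt_of_le_of_lt (by positivity) hsr)
        (lt_of_le_of_lt (by positivity) hsr))]
    have hscaled : 2 * r * (‖e'‖ + α / 5 * (η * s)) ≤ 2 * r * r := by
      nlinarith [mul_le_mul_of_nonneg_left hsr.le (mul_nonneg hη.le hs),
        mul_le_mul_of_nonneg_left he'w (by linarith : (0:ℝ) ≤ 2 * r),
        mul_nonneg hη.le (mul_nonneg hs hs)]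
    nlinarith

end LinearStep

section GradientStep

variable {E F : Type*} [NormedAddCommGroup E] [InnerProductSpace ℝ E] [CompleteSpace E]
  [NormedAddCommGroup F] [InnerProductSpace ℝ F] [CompleteSpace F]

theorem gradient_step_residual_bounds {f : E → F} (hf : Differentiable ℝ f) (y : F)
    {θ₀ θ θ' : E} (N : Seminorm ℝ E) (hN : ∀ x, N x ≤ ‖x‖) {α β η : ℝ} (hα : 0 < α)
    (hη : 0 < η) (hηβ : η * β ^ 2 ≤ 1) (hαβ : 2 * α ≤ β)
    (hlow₀ : ∀ v, 2 * α * ‖v‖ ≤ ‖adjoint (fderiv ℝ f θ₀) v‖)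
    (hnear : ∀ θ, N (θ - θ₀) ≤ 5 * ‖y - f θ₀‖ / α → ‖fderiv ℝ f θ - fderiv ℝ f θ₀‖ ≤ α / 3)
    (hJ : ‖fderiv ℝ f θ‖ ≤ β)
    (hθ' : θ' = θ - η • adjoint (fderiv ℝ f θ) (f θ - y))
    (hθ : α / 5 * N (θ - θ₀) + ‖y - f θ‖ ≤ ‖y - f θ₀‖) :
    α / 5 * N (θ' - θ₀) + ‖y - f θ'‖ ≤ ‖y - f θ₀‖ ∧
      ‖y - f θ'‖ ≤ (1 - η * α ^ 2 / 4) * ‖y - f θ‖ := by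
  rw [norm_sub_rev y (f θ)] at hθ ⊢
  rw [norm_sub_rev y (f θ')]
  set J := fderiv ℝ f θ
  set J₀ := fderiv ℝ f θ₀
  set e := f θ - y
  set s := ‖adjoint J e‖
  have hstep : θ' - θ = -(η • adjoint J e) := by rw [hθ']; abel
  have hstep_norm : ‖θ' - θ‖ = η * s := by
    rw [hstep, norm_neg, norm_smul, Real.norm_of_nonneg hη.le]
  have hstep_seminorm : N (θ' - θ) ≤ η * s := (hN _).trans_eq hstep_norm
  have hs : α * (η * s) ≤ ‖e‖ := by
    have hsβ : s ≤ β * ‖e‖ := (J.norm_adjoint_apply_le e).trans (by gcongr)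
    have hβ : 0 ≤ η * β * ‖e‖ := by
      have : 0 ≤ β := by linarith
      positivity
    nlinarith [mul_le_mul_of_nonneg_left hsβ (mul_nonneg hα.le hη.le),
      mul_le_mul_of_nonneg_right (by linarith : α ≤ β) hβ,
      mul_le_mul_of_nonneg_right hηβ (norm_nonneg e)]
  have hseg : ∀ ξ ∈ segment ℝ θ θ', ‖fderiv ℝ f ξ - J₀‖ ≤ α / 3 := fun ξ hξ => by
    refine hnear ξ ((le_div_iff₀ hα).mpr ?_)
    nlinarith [mul_le_mul_of_nonneg_left (N.map_sub_le_of_mem_segment θ₀ hξ) hα.le,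
      mul_le_mul_of_nonneg_left hstep_seminorm hα.le, norm_nonneg e]
  have hJJ₀ : ‖J - J₀‖ ≤ α / 3 := hseg θ (left_mem_segment ℝ θ θ')
  have hlow : ∀ v, 5 * α / 3 * ‖v‖ ≤ ‖adjoint J v‖ := by
    have hadj : ‖adjoint J - adjoint J₀‖ ≤ α / 3 := by
      rwa [← map_sub, LinearIsometryEquiv.norm_map]
    intro v
    linarith [mul_norm_le_norm_apply_of_norm_sub_le hlow₀ hadj v]
  have hremainder : ‖f θ' - f θ - J (θ' - θ)‖ ≤ 2 * α / 3 * ‖θ' - θ‖ := by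
    refine Convex.norm_image_sub_le_of_norm_fderiv_le' (fun ξ _ => hf ξ) (fun ξ hξ => ?_)
      (convex_segment θ θ') (left_mem_segment ℝ θ θ') (right_mem_segment ℝ θ θ')
    linarith [norm_sub_le_norm_sub_add_norm_sub (fderiv ℝ f ξ) J₀ J, hseg ξ hξ,
      norm_sub_rev J J₀]
  have hdecrease : ‖f θ' - y‖ + α / 5 * (η * s) ≤ ‖e‖ := by
    refine norm_add_le_of_norm_sub_linearResidualStep_le hα hη hηβ (by linarith) hJ hlow ?_
    have hlinear : f θ' - y - linearResidualStep J η e = f θ' - f θ - J (θ' - θ) := by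
      simp only [linearResidualStep, hstep, map_neg, map_smul, e]; abel
    rw [hlinear, ← hstep_norm]
    exact hremainder
  constructor
  · nlinarith [N.map_sub_le_of_mem_segment θ₀ (right_mem_segment ℝ θ θ')]
  · have hηα : 0 ≤ η * α ^ 2 * ‖e‖ := by positivity
    nlinarith [mul_le_mul_of_nonneg_left (hlow e) (by positivity : 0 ≤ α / 5 * η)]

end GradientStep

theorem overparam_gradient_descent_convergence_general {p n : ℕ}
    (f : EuclideanSpace ℝ (Fin p) → EuclideanSpace ℝ (Fin n))
    (hf : Differentiable ℝ f)
    (y : EuclideanSpace ℝ (Fin n)) (θ₀ : EuclideanSpace ℝ (Fin p))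
    (Nst : Seminorm ℝ (EuclideanSpace ℝ (Fin p)))
    (hNdom : ∀ x, Nst x ≤ ‖x‖)
    (α β : ℝ) (hα : 0 < α)
    (h1 : 2 * α ≤ ⨅ u : {u : EuclideanSpace ℝ (Fin n) // ‖u‖ = 1},
        ‖ContinuousLinearMap.adjoint (fderiv ℝ f θ₀) (u : EuclideanSpace ℝ (Fin n))‖)
    (h2 : ∀ θ, Nst (θ - θ₀) ≤ 5 * ‖y - f θ₀‖ / α →
        ‖fderiv ℝ f θ - fderiv ℝ f θ₀‖ ≤ α / 3)
    (h3 : ∀ θ, ‖fderiv ℝ f θ‖ ≤ β)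
    (η : ℝ) (hη0 : 0 < η) (hη : η ≤ 1 / β ^ 2)
    (θseq : ℕ → EuclideanSpace ℝ (Fin p))
    (hθ0 : θseq 0 = θ₀)
    (hstep : ∀ τ : ℕ, θseq (τ + 1) = θseq τ -
        η • ContinuousLinearMap.adjoint (fderiv ℝ f (θseq τ)) (f (θseq τ) - y)) :
    ∀ τ : ℕ,
      ‖y - f (θseq τ)‖ ≤ (1 - η * α ^ 2 / 4) ^ τ * ‖y - f θ₀‖ ∧
      α / 5 * Nst (θseq τ - θ₀) + ‖y - f (θseq τ)‖ ≤ ‖y - f θ₀‖ := by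
  have hlow₀ := mul_norm_le_norm_apply_of_le_iInf_sphere _ h1
  have hαβ : 2 * α ≤ β := by
    refine (le_opNorm_of_le_iInf_sphere _ (by positivity) h1).trans ?_
    exact (LinearIsometryEquiv.norm_map adjoint _).trans_le (h3 θ₀)
  have hηβ : η * β ^ 2 ≤ 1 := by
    rwa [le_div_iff₀ (by nlinarith)] at hη
  have hρ : 0 ≤ 1 - η * α ^ 2 / 4 := by nlinarith
  intro τ
  induction τ with
  | zero => simp [hθ0]
  | succ τ ih =>
    obtain ⟨hinvariant, hcontract⟩ := gradient_step_residual_bounds hf y Nst hNdom hα hη0 hηβ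
      hαβ hlow₀ h2 (h3 _) (hstep τ) ih.2
    refine ⟨?_, hinvariant⟩
    calc ‖y - f (θseq (τ + 1))‖ ≤ (1 - η * α ^ 2 / 4) * ‖y - f (θseq τ)‖ := hcontract
      _ ≤ (1 - η * α ^ 2 / 4) * ((1 - η * α ^ 2 / 4) ^ τ * ‖y - f θ₀‖) := by gcongr; exact ih.1
      _ = (1 - η * α ^ 2 / 4) ^ (τ + 1) * ‖y - f θ₀‖ := by ring

/-- non-smooth overparameterized optimization: let `f : ℝ^p → ℝ^n` be
differentiable with Jacobian `J(θ) = fderiv ℝ f θ`, let `‖·‖_*` (here `Nst`, a norm on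
`ℝ^p`) be dominated by the Euclidean norm. Suppose `σ_min(J(θ₀)) ≥ 2α` (where `σ_min` is
the infimum of `‖J(θ₀)ᵀ u‖` over unit vectors `u`), `‖J(θ) − J(θ₀)‖ ≤ α/3` whenever
`‖θ − θ₀‖_* ≤ R := 5‖y − f(θ₀)‖/α`, and `‖J(θ)‖ ≤ β` for all `θ`. Then for any step size
`0 < η ≤ 1/β²`, the iterations `θ_{τ+1} = θ_τ − η·J(θ_τ)ᵀ(f(θ_τ) − y)` satisfy
`‖y − f(θ_τ)‖ ≤ (1 − ηα²/4)^τ ‖y − f(θ₀)‖` and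
`(α/5)‖θ_τ − θ₀‖_* + ‖y − f(θ_τ)‖ ≤ ‖y − f(θ₀)‖` for all `τ`. -/
theorem overparam_gradient_descent_convergence {p n : ℕ}
    (f : EuclideanSpace ℝ (Fin p) → EuclideanSpace ℝ (Fin n))
    (hf : Differentiable ℝ f)
    (y : EuclideanSpace ℝ (Fin n)) (θ₀ : EuclideanSpace ℝ (Fin p))
    (Nst : Seminorm ℝ (EuclideanSpace ℝ (Fin p)))
    (hNdef : ∀ x, Nst x = 0 → x = 0)
    (hNdom : ∀ x, Nst x ≤ ‖x‖)
    (α β : ℝ) (hα : 0 < α) (hβ : 0 < β)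
    (h1 : 2 * α ≤ ⨅ u : {u : EuclideanSpace ℝ (Fin n) // ‖u‖ = 1},
        ‖ContinuousLinearMap.adjoint (fderiv ℝ f θ₀) (u : EuclideanSpace ℝ (Fin n))‖)
    (h2 : ∀ θ, Nst (θ - θ₀) ≤ 5 * ‖y - f θ₀‖ / α →
        ‖fderiv ℝ f θ - fderiv ℝ f θ₀‖ ≤ α / 3)
    (h3 : ∀ θ, ‖fderiv ℝ f θ‖ ≤ β)
    (η : ℝ) (hη0 : 0 < η) (hη : η ≤ 1 / β ^ 2)
    (θseq : ℕ → EuclideanSpace ℝ (Fin p))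
    (hθ0 : θseq 0 = θ₀)
    (hstep : ∀ τ : ℕ, θseq (τ + 1) = θseq τ -
        η • ContinuousLinearMap.adjoint (fderiv ℝ f (θseq τ)) (f (θseq τ) - y)) :
    ∀ τ : ℕ,
      ‖y - f (θseq τ)‖ ≤ (1 - η * α ^ 2 / 4) ^ τ * ‖y - f θ₀‖ ∧
      α / 5 * Nst (θseq τ - θ₀) + ‖y - f (θseq τ)‖ ≤ ‖y - f θ₀‖ :=
  overparam_gradient_descent_convergence_general f hf y θ₀ Nst hNdom α β hα h1 h2 h3 η hη0 hη θseq
    hθ0 hstep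
end

section
/- Let z ∈ ℝ^k be nonzero and let W₀, W ∈ ℝ^{d×k}. Define S(W) = {ℓ ∈ {1,…,d} : sign((Wz)_ℓ) ≠ sign((W₀z)_ℓ)}. For any positive integer m, if ‖W − W₀‖ ≤ √m·|W₀z|_{m−}/‖z‖ (spectral norm), then |S(W)| ≤ 2m. -/
open MeasureTheory ProbabilityTheory Matrix

noncomputable section

/-- Euclidean norm of a vector. -/
def evnorm {ι : Type*} [Fintype ι] (x : ι → ℝ) : ℝ := Real.sqrt (∑ i, x i ^ 2)

/-- Spectral (ℓ2 operator) norm of a matrix. -/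
def specNorm {m n : Type*} [Fintype m] [Fintype n] (A : Matrix m n ℝ) : ℝ :=
  ⨆ x : {x : n → ℝ // evnorm x ≤ 1}, evnorm (A.mulVec x)

/-- `|v|_{m−}`: the `m`-th smallest entry (1-indexed) of `v` after sorting the entries by
absolute value. -/
def kthSmallestAbs {d : ℕ} (v : Fin d → ℝ) (m : ℕ) : ℝ :=
  ((Finset.univ.val.map fun ℓ => |v ℓ|).sort (· ≤ ·)).getD (m - 1) 0

/-- The set `S(W) = {ℓ : sign((Wz)_ℓ) ≠ sign((W₀z)_ℓ)}` of sign changes. -/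
def signChanges {d k : ℕ} (z : Fin k → ℝ) (W₀ W : Matrix (Fin d) (Fin k) ℝ) :
    Finset (Fin d) :=
  Finset.univ.filter fun ℓ => Real.sign (W.mulVec z ℓ) ≠ Real.sign (W₀.mulVec z ℓ)

/-! The perturbation `δ = (W − W₀) z` has `‖δ‖ ≤ ‖W − W₀‖ ‖z‖ ≤ √m t`, where `t = |W₀z|_{m−}`.
A sign change at `ℓ` forces `δ_ℓ ≠ 0` and `|δ_ℓ| ≥ |(W₀z)_ℓ|`. Fewer than `m` coordinates have
`|(W₀z)_ℓ| < t`; every other sign change has `δ_ℓ² ≥ t²`, so there are at most `‖δ‖² / t² ≤ m`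
of those (and none if `t = 0`, since then `δ = 0`). -/

lemma evnorm_eq_norm {ι : Type*} [Fintype ι] (x : ι → ℝ) : evnorm x = ‖WithLp.toLp 2 x‖ := by
  simp [evnorm, EuclideanSpace.norm_eq]

lemma evnorm_sq {ι : Type*} [Fintype ι] (x : ι → ℝ) : evnorm x ^ 2 = ∑ i, x i ^ 2 :=
  Real.sq_sqrt (Finset.sum_nonneg fun _ _ => sq_nonneg _)

lemma evnorm_smul {ι : Type*} [Fintype ι] (c : ℝ) (x : ι → ℝ) :
    evnorm (c • x) = |c| * evnorm x := by
  simp only [evnorm_eq_norm, WithLp.toLp_smul, norm_smul, Real.norm_eq_abs]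

lemma bddAbove_evnorm_mulVec_unitBall {m n : Type*} [Fintype m] [Fintype n]
    (A : Matrix m n ℝ) :
    BddAbove (Set.range fun x : {x : n → ℝ // evnorm x ≤ 1} => evnorm (A *ᵥ x)) := by
  classical
  let T := (toEuclideanLin.trans LinearMap.toContinuousLinearMap) A
  refine ⟨‖T‖, ?_⟩
  rintro _ ⟨⟨x, hx⟩, rfl⟩
  calc evnorm (A *ᵥ x) = ‖T (WithLp.toLp 2 x)‖ := evnorm_eq_norm _
    _ ≤ ‖T‖ * evnorm x := by rw [evnorm_eq_norm]; exact T.le_opNorm _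
    _ ≤ ‖T‖ := mul_le_of_le_one_right (norm_nonneg T) hx

lemma evnorm_mulVec_le {m n : Type*} [Fintype m] [Fintype n] (A : Matrix m n ℝ)
    (x : n → ℝ) : evnorm (A *ᵥ x) ≤ specNorm A * evnorm x := by
  rcases eq_or_ne x 0 with rfl | hx
  · simp [evnorm]
  have hpos : 0 < evnorm x := by
    rw [evnorm_eq_norm]; exact norm_pos_iff.2 (by simpa using hx)
  have hunit : evnorm ((evnorm x)⁻¹ • x) = 1 := by
    rw [evnorm_smul, abs_of_pos (inv_pos.2 hpos), inv_mul_cancel₀ hpos.ne']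
  have := le_ciSup (bddAbove_evnorm_mulVec_unitBall A) ⟨_, hunit.le⟩
  rw [mulVec_smul, evnorm_smul, abs_of_pos (inv_pos.2 hpos), inv_mul_le_iff₀ hpos] at this
  exact this.trans_eq (mul_comm _ _)

lemma evnorm_mulVec_le_of_specNorm_le_div {m n : Type*} [Fintype m] [Fintype n]
    {A : Matrix m n ℝ} {x : n → ℝ} {c : ℝ} (hc : 0 ≤ c) (h : specNorm A ≤ c / evnorm x) :
    evnorm (A *ᵥ x) ≤ c :=
  calc evnorm (A *ᵥ x) ≤ specNorm A * evnorm x := evnorm_mulVec_le A x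
    _ ≤ c / evnorm x * evnorm x := mul_le_mul_of_nonneg_right h (Real.sqrt_nonneg _)
    _ ≤ c := by
      rcases eq_or_ne (evnorm x) 0 with h0 | h0
      · rwa [h0, mul_zero]
      · rw [div_mul_cancel₀ _ h0]

lemma List.Pairwise.countP_lt_getD_le {α : Type*} [LinearOrder α] {L : List α}
    (hL : L.Pairwise (· ≤ ·)) (i : ℕ) (x : α) :
    L.countP (fun a => a < L.getD i x) ≤ i := by
  rcases lt_or_ge i L.length with hi | hi
  · rw [L.getD_eq_getElem x hi]
    have hdrop : (L.drop i).countP (fun a => a < L[i]) = 0 := by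
      have hsorted := hL.drop (i := i)
      rw [List.drop_eq_getElem_cons hi, List.pairwise_cons] at hsorted
      rw [List.drop_eq_getElem_cons hi, List.countP_eq_zero]
      simp only [List.mem_cons, decide_eq_true_eq, not_lt]
      rintro a (rfl | ha)
      exacts [le_rfl, hsorted.1 a ha]
    have htake := (L.take i).countP_le_length (p := fun a => a < L[i])
    simp only [List.length_take] at htake
    have hsplit := congrArg (List.countP fun a => a < L[i]) (L.take_append_drop i)
    rw [List.countP_append] at hsplit
    omega
  · exact L.countP_le_length.trans hi

lemma kthSmallestAbs_nonneg {d : ℕ} (v : Fin d → ℝ) (m : ℕ) : 0 ≤ kthSmallestAbs v m := by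
  set L := (Finset.univ.val.map fun ℓ => |v ℓ|).sort (· ≤ ·)
  rcases lt_or_ge (m - 1) L.length with hi | hi
  · obtain ⟨ℓ, -, hℓ⟩ := Multiset.mem_map.1 ((Multiset.mem_sort _).1 (L.getElem_mem hi))
    rw [kthSmallestAbs, L.getD_eq_getElem 0 hi, ← hℓ]
    exact abs_nonneg _
  · rw [kthSmallestAbs, L.getD_eq_default 0 hi]

lemma card_abs_lt_kthSmallestAbs_le {d : ℕ} (v : Fin d → ℝ) (m : ℕ) :
    (Finset.univ.filter fun ℓ => |v ℓ| < kthSmallestAbs v m).card ≤ m - 1 := by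
  set M := Finset.univ.val.map fun ℓ => |v ℓ|
  calc (Finset.univ.filter fun ℓ => |v ℓ| < kthSmallestAbs v m).card
      = M.countP (· < kthSmallestAbs v m) := by rw [Multiset.countP_map]; rfl
    _ = (M.sort (· ≤ ·)).countP (· < kthSmallestAbs v m) := by
      rw [← Multiset.coe_countP, Multiset.sort_eq]
    _ ≤ m - 1 := (M.pairwise_sort _).countP_lt_getD_le _ _

lemma abs_le_abs_sub_of_sign_ne {u v : ℝ} (h : Real.sign u ≠ Real.sign v) : |v| ≤ |u - v| := by
  have huv : u * v ≤ 0 := by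
    by_contra! huv
    rcases pos_and_pos_or_neg_and_neg_of_mul_pos huv with ⟨hu, hv⟩ | ⟨hu, hv⟩
    · exact h (by rw [Real.sign_of_pos hu, Real.sign_of_pos hv])
    · exact h (by rw [Real.sign_of_neg hu, Real.sign_of_neg hv])
  exact sq_le_sq.1 (by nlinarith)

lemma Finset.card_le_of_sq_le_sum_sq {ι : Type*} {s : Finset ι} {f : ι → ℝ} {t : ℝ} {m : ℕ}
    (ht : 0 ≤ t) (hne : ∀ i ∈ s, f i ≠ 0) (hle : ∀ i ∈ s, t ≤ |f i|)
    (hsum : ∑ i ∈ s, f i ^ 2 ≤ m * t ^ 2) : s.card ≤ m := by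
  rcases s.eq_empty_or_nonempty with rfl | hs
  · simp
  have hpos : 0 < ∑ i ∈ s, f i ^ 2 :=
    Finset.sum_pos (fun i hi => by have := hne i hi; positivity) hs
  have hlow : s.card * t ^ 2 ≤ ∑ i ∈ s, f i ^ 2 := by
    rw [← nsmul_eq_mul, ← Finset.sum_const]
    exact Finset.sum_le_sum fun i hi => by simpa only [sq_abs] using pow_le_pow_left₀ ht (hle i hi) 2
  have ht2 : 0 < t ^ 2 := by nlinarith [sq_nonneg t]
  exact_mod_cast le_of_mul_le_mul_right (hlow.trans hsum) ht2

lemma Finset.card_le_card_abs_lt_add {ι : Type*} [Fintype ι] {s : Finset ι} {v δ : ι → ℝ}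
    {t : ℝ} {m : ℕ} (ht : 0 ≤ t) (hs : ∀ i ∈ s, δ i ≠ 0 ∧ |v i| ≤ |δ i|)
    (hsum : ∑ i, δ i ^ 2 ≤ m * t ^ 2) :
    s.card ≤ (Finset.univ.filter fun i => |v i| < t).card + m := by
  have hlarge : (s.filter fun i => ¬ |v i| < t).card ≤ m := by
    refine Finset.card_le_of_sq_le_sum_sq ht (fun i hi => (hs i (Finset.mem_filter.1 hi).1).1)
      (fun i hi => ?_) ((Finset.sum_le_sum_of_subset_of_nonneg (Finset.subset_univ _)
        fun i _ _ => sq_nonneg (δ i)).trans hsum)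
    obtain ⟨hi, hvt⟩ := Finset.mem_filter.1 hi
    exact (not_lt.1 hvt).trans (hs i hi).2
  have hsmall := Finset.card_le_card
    (Finset.filter_subset_filter (fun i => |v i| < t) (Finset.subset_univ s))
  rw [← Finset.card_filter_add_card_filter_not (fun i => |v i| < t)]
  omega

theorem sign_changes_card_le_general {d k : ℕ} (z : Fin k → ℝ)
    (W₀ W : Matrix (Fin d) (Fin k) ℝ) (m : ℕ)
    (h : specNorm (W - W₀) ≤ Real.sqrt m * kthSmallestAbs (W₀.mulVec z) m / evnorm z) :
    (signChanges z W₀ W).card ≤ 2 * m := by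
  set v := W₀ *ᵥ z
  set t := kthSmallestAbs v m
  set δ := (W - W₀) *ᵥ z
  have ht : 0 ≤ t := kthSmallestAbs_nonneg v m
  have hsum : ∑ ℓ, δ ℓ ^ 2 ≤ m * t ^ 2 := by
    rw [← evnorm_sq, ← Real.sq_sqrt (Nat.cast_nonneg m), ← mul_pow]
    exact pow_le_pow_left₀ (Real.sqrt_nonneg _)
      (evnorm_mulVec_le_of_specNorm_le_div (by positivity) h) 2
  have hsign : ∀ ℓ ∈ signChanges z W₀ W, δ ℓ ≠ 0 ∧ |v ℓ| ≤ |δ ℓ| := by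
    intro ℓ hℓ
    have hne := (Finset.mem_filter.1 hℓ).2
    simp only [δ, sub_mulVec, Pi.sub_apply]
    exact ⟨sub_ne_zero.2 fun heq => hne (congrArg Real.sign heq), abs_le_abs_sub_of_sign_ne hne⟩
  have hcard := Finset.card_le_card_abs_lt_add ht hsign hsum
  have hsmall : (Finset.univ.filter fun ℓ => |v ℓ| < t).card ≤ m - 1 :=
    card_abs_lt_kthSmallestAbs_le v m
  omega

/-- if `‖W − W₀‖ ≤ √m·|W₀z|_{m−}/‖z‖` (spectral norm), then `|S(W)| ≤ 2m`. -/
theorem sign_changes_card_le {d k : ℕ} (z : Fin k → ℝ) (hz : z ≠ 0)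
    (W₀ W : Matrix (Fin d) (Fin k) ℝ) (m : ℕ) (hm : 0 < m) (hmd : m ≤ d)
    (h : specNorm (W - W₀) ≤ Real.sqrt m * kthSmallestAbs (W₀.mulVec z) m / evnorm z) :
    (signChanges z W₀ W).card ≤ 2 * m :=
  sign_changes_card_le_general z W₀ W m h
end
end

section
/- Let z ∈ ℝ^k be a fixed nonzero vector and let W₀ ∈ ℝ^{d×k} be a random matrix with i.i.d. N(0,1) entries. Then for any positive integer m ≤ d, with probability at least 1 − e^{−m/6}, it holds that |W₀z|_{m−}/‖z‖ ≥ m/(2d). -/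
open MeasureTheory ProbabilityTheory Matrix

noncomputable section

instance matMeasurableSpace {m n : ℕ} : MeasurableSpace (Matrix (Fin m) (Fin n) ℝ) :=
  inferInstanceAs (MeasurableSpace (Fin m → Fin n → ℝ))

/-- Law of a random `m × n` matrix with i.i.d. `N(0, v)` entries (variance `v`). -/
def matrixGaussian (m n : ℕ) (v : NNReal) : Measure (Matrix (Fin m) (Fin n) ℝ) :=
  Measure.pi fun _ : Fin m => Measure.pi fun _ : Fin n => gaussianReal 0 v

/-!
Each entry `(W₀ z)_i = ∑ j, W₀ i j * z j` is `N(0, ‖z‖²)`, and this density is at most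
`1 / (‖z‖ √(2π))`, so with `τ = m ‖z‖ / (2d)` each entry satisfies `|(W₀ z)_i| < τ` with
probability at most `p = m / (d √(2π))`. The `m`-th smallest `|(W₀ z)_i|` is below `τ` only if
at least `m` of the `d` independent entries are; Markov's inequality for `2 ^ N`, `N` the number
of such entries, bounds this by `2⁻ᵐ (1 + p)ᵈ ≤ exp (m / √(2π) - m log 2) ≤ exp (-m / 6)`.
-/

open Real NNReal Finset

lemma sum_sq_pos_of_ne_zero {ι : Type*} [Fintype ι] {z : ι → ℝ} (hz : z ≠ 0) :
    0 < ∑ j, z j ^ 2 := by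
  obtain ⟨j, hj⟩ : ∃ j, z j ≠ 0 := Function.ne_iff.mp hz
  exact Finset.sum_pos' (fun _ _ => sq_nonneg _) ⟨j, Finset.mem_univ j, by positivity⟩

lemma map_pi_gaussianReal_sum_mul {ι : Type*} [Fintype ι] (z : ι → ℝ) :
    (Measure.pi fun _ : ι => gaussianReal 0 1).map (fun r => ∑ j, r j * z j)
      = gaussianReal 0 (∑ j, z j ^ 2).toNNReal := by
  set L := innerSL ℝ (WithLp.toLp 2 z : EuclideanSpace ℝ ι)
  have hL : (fun r : ι → ℝ => ∑ j, r j * z j) = L ∘ WithLp.toLp 2 := by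
    ext r; simp [L, PiLp.inner_apply, mul_comm]
  rw [hL, ← Measure.map_map (by fun_prop) (by fun_prop), map_pi_eq_stdGaussian,
    IsGaussian.eq_gaussianReal ((stdGaussian _).map L) inferInstance,
    integral_map (by fun_prop) (by fun_prop), variance_map (by fun_prop) (by fun_prop)]
  simp only [id_eq, Function.id_comp, integral_strongDual_stdGaussian, variance_dual_stdGaussian,
    L, innerSL_apply_norm, EuclideanSpace.real_norm_sq_eq]

lemma gaussianPDF_le (μ : ℝ) (v : ℝ≥0) (x : ℝ) :
    gaussianPDF μ v x ≤ ENNReal.ofReal (√(2 * π * v))⁻¹ := by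
  refine ENNReal.ofReal_le_ofReal ?_
  rw [gaussianPDFReal_def]
  refine mul_le_of_le_one_right (by positivity) (exp_le_one_iff.mpr ?_)
  exact div_nonpos_of_nonpos_of_nonneg (neg_nonpos.mpr (sq_nonneg _)) (by positivity)

lemma gaussianReal_le_mul_volume (μ : ℝ) {v : ℝ≥0} (hv : v ≠ 0) (s : Set ℝ) :
    gaussianReal μ v s ≤ ENNReal.ofReal (√(2 * π * v))⁻¹ * volume s := by
  rw [gaussianReal_apply μ hv, ← setLIntegral_const]
  exact setLIntegral_mono (by fun_prop) fun x _ => gaussianPDF_le μ v x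

lemma gaussianReal_abs_lt_le {v : ℝ≥0} (hv : v ≠ 0) (τ : ℝ) :
    gaussianReal 0 v {x | |x| < τ} ≤ ENNReal.ofReal (2 * τ / √(2 * π * v)) := by
  have hball : {x : ℝ | |x| < τ} = Set.Ioo (-τ) τ := by ext; simp [abs_lt]
  refine (gaussianReal_le_mul_volume 0 hv _).trans_eq ?_
  rw [hball, Real.volume_Ioo, ← ENNReal.ofReal_mul (by positivity)]
  ring_nf

lemma measureReal_abs_sum_mul_lt_le {ι : Type*} [Fintype ι] {z : ι → ℝ} (hz : z ≠ 0)
    {τ : ℝ} (hτ : 0 ≤ τ) :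
    (Measure.pi fun _ : ι => gaussianReal 0 1).real {r | |∑ j, r j * z j| < τ}
      ≤ 2 * τ / (√(2 * π) * evnorm z) := by
  have hV := sum_sq_pos_of_ne_zero hz
  have hlaw : (Measure.pi fun _ : ι => gaussianReal 0 1) {r | |∑ j, r j * z j| < τ}
      = gaussianReal 0 (∑ j, z j ^ 2).toNNReal {x | |x| < τ} := by
    rw [← map_pi_gaussianReal_sum_mul, Measure.map_apply (by fun_prop)
      (measurableSet_lt (by fun_prop) measurable_const)]
    rfl
  refine ENNReal.toReal_le_of_le_ofReal (by unfold evnorm; positivity) ?_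
  refine hlaw.trans_le ((gaussianReal_abs_lt_le (by simpa using hV) τ).trans_eq ?_)
  rw [Real.coe_toNNReal _ hV.le, sqrt_mul (by positivity), evnorm]

lemma two_pow_mul_measureReal_le_card_filter_le {ι α : Type*} [Fintype ι] [MeasurableSpace α]
    (ν : Measure α) [IsProbabilityMeasure ν] {p : α → Prop} [DecidablePred p]
    (hp : MeasurableSet {a | p a}) (m : ℕ) :
    2 ^ m * (Measure.pi fun _ : ι => ν).real {W | m ≤ #{i | p (W i)}}
      ≤ (1 + ν.real {a | p a}) ^ Fintype.card ι := by
  set g : α → ℝ := fun a => 1 + {a | p a}.indicator 1 a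
  have hg : Measurable g := measurable_const.add (measurable_const.indicator hp)
  have hprod : ∀ W : ι → α, ∏ i, g (W i) = 2 ^ #{i | p (W i)} := fun W => by
    simp [g, Set.indicator_apply, add_ite, Finset.prod_ite, one_add_one_eq_two]
  have hint : ∫ a, g a ∂ν = 1 + ν.real {a | p a} := by
    rw [integral_add (integrable_const _) ((integrable_const 1).indicator hp),
      integral_indicator_one hp, integral_const, probReal_univ, one_smul]
  calc 2 ^ m * (Measure.pi fun _ : ι => ν).real {W | m ≤ #{i | p (W i)}}
      ≤ 2 ^ m * (Measure.pi fun _ : ι => ν).real {W | 2 ^ m ≤ ∏ i, g (W i)} := by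
        refine mul_le_mul_of_nonneg_left (measureReal_mono fun W hW => ?_) (by positivity)
        simp only [Set.mem_ofPred_eq, hprod] at hW ⊢
        exact_mod_cast Nat.pow_le_pow_right two_pos hW
    _ ≤ ∫ W, ∏ i, g (W i) ∂(Measure.pi fun _ : ι => ν) := by
        refine mul_meas_ge_le_integral_of_nonneg (ae_of_all _ fun W => ?_) ?_ _
        · simp only [hprod, Pi.zero_apply]; positivity
        · refine (integrable_const ((2:ℝ) ^ Fintype.card ι)).mono' ?_ (ae_of_all _ fun W => ?_)
          · exact (Finset.measurable_prod _ fun i _ =>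
              hg.comp (measurable_pi_apply i)).aestronglyMeasurable
          · rw [hprod, Real.norm_of_nonneg (by positivity)]
            exact pow_le_pow_right₀ one_le_two (card_le_univ _)
    _ = (1 + ν.real {a | p a}) ^ Fintype.card ι := by rw [integral_fintype_prod_eq_pow, hint]

lemma le_card_abs_lt_of_kthSmallestAbs_lt {d : ℕ} (v : Fin d → ℝ) {m : ℕ} (hmd : m ≤ d)
    {τ : ℝ} (h : kthSmallestAbs v m < τ) : m ≤ #{i | |v i| < τ} := by
  set L := (Finset.univ.val.map fun i => |v i|).sort (· ≤ ·)
  have hlen : L.length = d := by simp [L]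
  have hsorted : L.Pairwise (· ≤ ·) := Multiset.pairwise_sort _ _
  have hcount : #{i | |v i| < τ} = L.countP (· < τ) := by
    rw [← Multiset.coe_countP, Multiset.sort_eq, Multiset.countP_map, Finset.card_def,
      Finset.filter_val]
  rcases Nat.eq_zero_or_pos m with rfl | hm
  · exact Nat.zero_le _
  have hlast : L[m - 1] < τ := by
    rwa [kthSmallestAbs, List.getD_eq_getElem _ _ (by rw [hlen]; omega)] at h
  have htake : ∀ a ∈ L.take m, a < τ := by
    intro a ha
    obtain ⟨i, hi, rfl⟩ := List.mem_take_iff_getElem.mp ha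
    refine lt_of_le_of_lt ?_ hlast
    rcases (show i ≤ m - 1 by omega).eq_or_lt with rfl | hlt
    · exact le_rfl
    · exact List.pairwise_iff_getElem.mp hsorted _ _ _ _ hlt
  calc m = (L.take m).countP (· < τ) := by
        rw [List.countP_eq_length.mpr (by simpa using htake), List.length_take]; omega
    _ ≤ L.countP (· < τ) := (L.take_sublist m).countP_le
    _ = #{i | |v i| < τ} := hcount.symm

lemma inv_sqrt_two_pi_add_inv_six_le_log_two : (√(2 * π))⁻¹ + 6⁻¹ ≤ log 2 := by
  have hsqrt : 2.5 ≤ √(2 * π) :=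
    le_sqrt_of_sq_le (by nlinarith [pi_gt_d2])
  have hinv : (√(2 * π))⁻¹ ≤ 0.4 := by
    rw [inv_le_comm₀ (by linarith) (by norm_num)]; linarith
  linarith [log_two_gt_d9]

lemma one_add_pow_le_exp {x : ℝ} (hx : -1 ≤ x) (n : ℕ) : (1 + x) ^ n ≤ exp (n * x) := by
  rw [exp_nat_mul]
  exact pow_le_pow_left₀ (by linarith) (by linarith [add_one_le_exp x]) n

lemma one_add_div_pow_le_two_pow_mul_exp (m d : ℕ) :
    (1 + m / (d * √(2 * π))) ^ d ≤ 2 ^ m * exp (-m / 6) := by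
  have hdp : d * (m / (d * √(2 * π))) ≤ m * (√(2 * π))⁻¹ := by
    rcases eq_or_ne (d : ℝ) 0 with hd | hd
    · simp [hd]; positivity
    · exact (by field_simp : (d : ℝ) * (m / (d * √(2 * π))) = m * (√(2 * π))⁻¹).le
  calc (1 + m / (d * √(2 * π))) ^ d ≤ exp (m * (√(2 * π))⁻¹) :=
        (one_add_pow_le_exp (by linarith [show 0 ≤ m / (d * √(2 * π)) by positivity]) d).trans
          (exp_le_exp.mpr hdp)
    _ ≤ exp (m * log 2 + -m / 6) := by
        gcongr
        nlinarith [inv_sqrt_two_pi_add_inv_six_le_log_two, (Nat.cast_nonneg m : (0:ℝ) ≤ m)]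
    _ = 2 ^ m * exp (-m / 6) := by
        rw [exp_add, ← log_pow, exp_log (by positivity)]

lemma one_sub_measureReal_le_of_compl_subset {α : Type*} [MeasurableSpace α] {μ : Measure α}
    [IsProbabilityMeasure μ] {s t : Set α} (h : sᶜ ⊆ t) : 1 - μ.real t ≤ μ.real s := by
  have := measureReal_union_le (μ := μ) s sᶜ
  rw [Set.union_compl_self, probReal_univ] at this
  linarith [measureReal_mono h (μ := μ)]

instance isProbabilityMeasure_matrixGaussian (m n : ℕ) (v : ℝ≥0) :
    IsProbabilityMeasure (matrixGaussian m n v) :=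
  inferInstanceAs (IsProbabilityMeasure
    (Measure.pi fun _ : Fin m => Measure.pi fun _ : Fin n => gaussianReal 0 v))

theorem kth_smallest_abs_lower_bound_general {d k : ℕ} (z : Fin k → ℝ) (hz : z ≠ 0)
    (m : ℕ) (hmd : m ≤ d) :
    ENNReal.ofReal (1 - Real.exp (-(m : ℝ) / 6)) ≤
      matrixGaussian d k 1
        {W₀ | (m : ℝ) / (2 * d) ≤ kthSmallestAbs (W₀.mulVec z) m / evnorm z} := by
  have hσ : 0 < evnorm z := sqrt_pos.mpr (sum_sq_pos_of_ne_zero hz)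
  set τ := m / (2 * d) * evnorm z
  set ν := Measure.pi fun _ : Fin k => gaussianReal 0 1
  have hν : ν.real {r | |∑ j, r j * z j| < τ} ≤ m / (d * √(2 * π)) :=
    (measureReal_abs_sum_mul_lt_le hz (by positivity)).trans_eq (by field_simp; ring)
  have hF : (matrixGaussian d k 1).real {W | m ≤ #{i | |∑ j, W i j * z j| < τ}}
      ≤ exp (-m / 6) := by
    have hmarkov := two_pow_mul_measureReal_le_card_filter_le (ι := Fin d) ν
      (p := fun r => |∑ j, r j * z j| < τ) (measurableSet_lt (by fun_prop) measurable_const) m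
    rw [Fintype.card_fin] at hmarkov
    refine le_of_mul_le_mul_left (hmarkov.trans ?_) (by positivity : (0 : ℝ) < 2 ^ m)
    calc (1 + ν.real {r | |∑ j, r j * z j| < τ}) ^ d ≤ (1 + m / (d * √(2 * π))) ^ d := by
          gcongr
      _ ≤ 2 ^ m * exp (-m / 6) := one_add_div_pow_le_two_pow_mul_exp m d
  have hsub : {W₀ : Matrix (Fin d) (Fin k) ℝ |
      (m : ℝ) / (2 * d) ≤ kthSmallestAbs (W₀.mulVec z) m / evnorm z}ᶜ
      ⊆ {W | m ≤ #{i | |∑ j, W i j * z j| < τ}} := fun W hW =>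
    le_card_abs_lt_of_kthSmallestAbs_lt (W *ᵥ z) hmd (by simpa [le_div_iff₀ hσ] using hW)
  rw [← ofReal_measureReal]
  exact ENNReal.ofReal_le_ofReal
    ((sub_le_sub_left hF 1).trans (one_sub_measureReal_le_of_compl_subset hsub))

/-- if `W₀ ∈ ℝ^{d×k}` has i.i.d. `N(0,1)` entries, then for any positive
`m ≤ d`, with probability at least `1 − e^{−m/6}`, `|W₀z|_{m−}/‖z‖ ≥ m/(2d)`. -/
theorem kth_smallest_abs_lower_bound {d k : ℕ} (z : Fin k → ℝ) (hz : z ≠ 0)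
    (m : ℕ) (hm : 0 < m) (hmd : m ≤ d) :
    ENNReal.ofReal (1 - Real.exp (-(m : ℝ) / 6)) ≤
      matrixGaussian d k 1
        {W₀ | (m : ℝ) / (2 * d) ≤ kthSmallestAbs (W₀.mulVec z) m / evnorm z} :=
  kth_smallest_abs_lower_bound_general z hz m hmd
end
end
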